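/- arXiv:2005.03880 — 2 statements merged into one kernel-verified Lean document; each statement's English description precedes it below -/
import Mathlib

section
/- Fix integers n ≥ 3, k ≥ 2, s > 0 and, for 1 ≤ i ≤ s, integers d_i, g_i with d_i > g_i ≥ 0. If Σ_{i=1}^{s} (k·d_i + 1 − g_i) ≤ C(n+k, n), then Σ_{i=1}^{s} ((k+1)·d_i + 1 − g_i) < C(n+k+1, n). -/
/-!
Write `C = C(n+k, n)` and `D = C(n+k, n-1)`, so that `C(n+k+1, n) = C + D` and `n C = (k+1) D`.
Since `gᵢ < dᵢ`, each term `k dᵢ + 1 - gᵢ` exceeds `(k-1) dᵢ`, so `(k-1) ∑ dᵢ < ∑ (k dᵢ + 1 - gᵢ) ≤ C`.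
For `n ≥ 3` and `k ≥ 2` we have `k + 1 ≤ n (k-1)`, hence `C ≤ (k-1) D`, and therefore `∑ dᵢ < D`.
Adding the two bounds gives `∑ ((k+1) dᵢ + 1 - gᵢ) < C + D`.
-/

theorem Nat.choose_le_pred_mul_choose_pred {n k : ℕ} (h : k + 1 ≤ n * (k - 1)) :
    (n + k).choose n ≤ (k - 1) * (n + k).choose (n - 1) := by
  obtain ⟨m, rfl⟩ : ∃ m, n = m + 1 := Nat.exists_eq_add_of_le' (by nlinarith)
  have hmul : (m + 1 + k).choose (m + 1) * (m + 1) = (m + 1 + k).choose m * (k + 1) := by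
    rw [Nat.choose_succ_right_eq, show m + 1 + k - m = k + 1 by omega]
  refine Nat.le_of_mul_le_mul_right ?_ (Nat.succ_pos k)
  calc (m + 1 + k).choose (m + 1) * (k + 1)
      ≤ (m + 1 + k).choose (m + 1) * ((m + 1) * (k - 1)) := Nat.mul_le_mul_left _ h
    _ = (k - 1) * (m + 1 + k).choose (m + 1 - 1) * (k + 1) := by
      rw [Nat.add_sub_cancel, ← mul_assoc, hmul]; ring

/-- **Lemma (arithmetic).** Fix integers `n ≥ 3`, `k ≥ 2`, `s > 0` and, for `1 ≤ i ≤ s`,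
integers `dᵢ, gᵢ` with `dᵢ > gᵢ ≥ 0`. If `∑ᵢ (k dᵢ + 1 − gᵢ) ≤ C(n+k, n)`, then
`∑ᵢ ((k+1) dᵢ + 1 − gᵢ) < C(n+k+1, n)`. -/
theorem sum_lt_choose_succ_of_sum_le_choose
    (n k s : ℕ) (hn : 3 ≤ n) (hk : 2 ≤ k) (hs : 0 < s)
    (d g : Fin s → ℕ) (hdg : ∀ i, g i < d i)
    (h : ∑ i, ((k : ℤ) * (d i : ℤ) + 1 - (g i : ℤ)) ≤ ((n + k).choose n : ℤ)) :
    ∑ i, (((k : ℤ) + 1) * (d i : ℤ) + 1 - (g i : ℤ)) < ((n + k + 1).choose n : ℤ) := by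
  have : Nonempty (Fin s) := Fin.pos_iff_nonempty.mp hs
  have hsum_d : ((k : ℤ) - 1) * ∑ i, (d i : ℤ) < ∑ i, ((k : ℤ) * (d i : ℤ) + 1 - (g i : ℤ)) := by
    rw [Finset.mul_sum]
    refine Finset.sum_lt_sum_of_nonempty Finset.univ_nonempty fun i _ => ?_
    have := hdg i
    linarith
  have hCD : ((n + k).choose n : ℤ) ≤ ((k : ℤ) - 1) * ((n + k).choose (n - 1) : ℤ) := by
    have hk1 : ((k - 1 : ℕ) : ℤ) = (k : ℤ) - 1 := by omega
    rw [← hk1]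
    exact_mod_cast Nat.choose_le_pred_mul_choose_pred
      (by nlinarith [Nat.sub_add_cancel (by omega : 1 ≤ k)])
  have hd_lt : ∑ i, (d i : ℤ) < ((n + k).choose (n - 1) : ℤ) :=
    lt_of_mul_lt_mul_left (hsum_d.trans_le (h.trans hCD)) (by omega)
  calc ∑ i, (((k : ℤ) + 1) * (d i : ℤ) + 1 - (g i : ℤ))
      = ∑ i, ((k : ℤ) * (d i : ℤ) + 1 - (g i : ℤ)) + ∑ i, (d i : ℤ) := by
        rw [← Finset.sum_add_distrib]; congr 1; ext; ring
    _ < ((n + k).choose n : ℤ) + ((n + k).choose (n - 1) : ℤ) := by linarith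
    _ = ((n + k + 1).choose n : ℤ) := by
        rw [Nat.choose_succ_left _ _ (by omega)]; push_cast; ring
end

section
/- Fix a scheme A ∪ B ⊂ ℙ^n, n ≥ 3, with dim A ≤ n − 2, B an integral and non-degenerate curve, and A not intersecting a general secant line L of B. Then h^0(I_{A ∪ B ∪ L}(2)) = max{0, h^0(I_{A ∪ B}(2)) − 1}. -/
/-!
We work over an algebraically closed field `K` of characteristic zero and describe closed
subvarieties of `ℙ^n_K` through their affine cones inside `V = K^{n+1}` (so a point of
`ℙ^n` is a line through the origin, a line of `ℙ^n` is a plane through the origin, and the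
affine cone over a curve has Krull dimension `2`).
-/

open MvPolynomial

variable (K : Type) [Field K] [IsAlgClosed K] [CharZero K]

/-- A point of affine space `σ → K`, viewed as a point of the prime spectrum of the
polynomial ring (the kernel of the evaluation map at that point). -/
noncomputable def evalPoint (σ : Type) (x : σ → K) : PrimeSpectrum (MvPolynomial σ K) :=
  ⟨RingHom.ker (MvPolynomial.aeval x), RingHom.ker_isPrime _⟩

/-- The Zariski topology on affine space `σ → K`, induced from the prime spectrum of the
polynomial ring; its closed sets are exactly the algebraic subsets. -/
noncomputable def zariski (σ : Type) : TopologicalSpace (σ → K) :=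
  TopologicalSpace.induced (evalPoint K σ) inferInstance

/-- The Zariski topology on a product of two affine spaces. -/
noncomputable def zariskiProd (σ : Type) : TopologicalSpace ((σ → K) × (σ → K)) :=
  TopologicalSpace.induced (fun p => Sum.elim p.1 p.2) (zariski K (σ ⊕ σ))

/-- The Zariski topology on a subset of affine space. -/
noncomputable def zariskiSub (σ : Type) (S : Set (σ → K)) : TopologicalSpace S :=
  TopologicalSpace.induced Subtype.val (zariski K σ)

/-- The (Krull) dimension of a subset of affine space, for its Zariski topology.
The affine cone over a projective variety of dimension `r` has dimension `r + 1`. -/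
noncomputable def coneDim (σ : Type) (S : Set (σ → K)) : WithBot ℕ∞ :=
  @topologicalKrullDim S (zariskiSub K σ S)

/-- `S ⊆ V` is a cone, i.e. comes from a subset of `ℙ(V)`. -/
def IsProjCone (σ : Type) (S : Set (σ → K)) : Prop := ∀ (c : K), ∀ x ∈ S, c • x ∈ S

/-- The space of homogeneous forms of degree `t` on `ℙ^n` vanishing on (the cone) `S`,
i.e. `H⁰(ℐ_S(t))` for the reduced subscheme `S`. -/
noncomputable def formsVanishingOn (σ : Type) (t : ℕ) (S : Set (σ → K)) :
    Submodule K (MvPolynomial σ K) :=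
  (homogeneousSubmodule σ K t) ⊓ ⨅ x ∈ S, LinearMap.ker (MvPolynomial.aeval x).toLinearMap

/-- `h⁰(ℐ_S(t))` for a reduced closed subscheme of `ℙ^n` with affine cone `S ⊆ K^{n+1}`. -/
noncomputable def h0I (n t : ℕ) (S : Set (Fin (n + 1) → K)) : ℕ :=
  Module.finrank K (formsVanishingOn K (Fin (n + 1)) t S)

/-!
A quadric `f` through `A ∪ B` already vanishes at `p, q ∈ B`; on the line `⟨p, q⟩` it restricts
to `a² f(p) + ab · polar(p, q) + b² f(q) = ab · f(p + q)`, so it contains the line exactly when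
`f(p + q) = 0`. Thus the quadrics through `A ∪ B ∪ L` form the kernel of the functional
"evaluate at `p + q`", of codimension one unless that functional vanishes on all quadrics through
`A ∪ B`. The pairs where it does not vanish form a Zariski open set `U`, and `U` meets `B × B`:
otherwise a nonzero such quadric would have polar form vanishing on `B × B`, hence, `B` spanning
the whole space and `2` being invertible, it would be zero.
-/

theorem Finsupp.exists_eq_single_add_single_of_degree_eq_two {σ : Type*} {d : σ →₀ ℕ}
    (hd : d.degree = 2) : ∃ i j, d = single i 1 + single j 1 := by
  classical
  obtain ⟨i, j, hij⟩ := Multiset.card_eq_two.mp ((card_toMultiset d).trans hd)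
  refine ⟨i, j, ?_⟩
  rw [← toMultiset_toFinsupp d, hij, Multiset.insert_eq_cons, ← Multiset.singleton_add,
    Multiset.toFinsupp_add, Multiset.toFinsupp_singleton, Multiset.toFinsupp_singleton]

theorem MvPolynomial.IsHomogeneous.exists_quadraticMap {R σ : Type*} [CommRing R]
    {f : MvPolynomial σ R} (hf : f.IsHomogeneous 2) :
    ∃ Q : QuadraticMap R (σ → R) R, ∀ x, Q x = MvPolynomial.aeval x f := by
  have hspan : f ∈ Submodule.span R
      ((fun d ↦ AddMonoidAlgebra.single d 1) '' {d : σ →₀ ℕ | d.degree = 2}) := by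
    rwa [← AddMonoidAlgebra.supported_eq_span_single, ← homogeneousSubmodule_eq_finsupp_supported]
  clear hf
  induction hspan using Submodule.span_induction with
  | mem g hg =>
    obtain ⟨d, hd, rfl⟩ := hg
    obtain ⟨i, j, rfl⟩ := Finsupp.exists_eq_single_add_single_of_degree_eq_two hd
    have hXX : AddMonoidAlgebra.single (Finsupp.single i 1 + Finsupp.single j 1) (1 : R) =
        (X i * X j : MvPolynomial σ R) := by
      rw [X, X, monomial_mul, one_mul]; rfl
    exact ⟨QuadraticMap.proj i j, fun x ↦ by simp [hXX]⟩
  | zero => exact ⟨0, by simp⟩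
  | add g h _ _ hg hh =>
    obtain ⟨Q, hQ⟩ := hg
    obtain ⟨Q', hQ'⟩ := hh
    exact ⟨Q + Q', by simp [hQ, hQ']⟩
  | smul a g _ hg =>
    obtain ⟨Q, hQ⟩ := hg
    exact ⟨a • Q, by simp [hQ]⟩


namespace QuadraticMap

variable {R M N : Type*} [CommRing R] [AddCommGroup M] [Module R M] [AddCommGroup N] [Module R N]

theorem eq_zero_of_polar_eq_zero (Q : QuadraticMap R M N) (h2 : IsUnit (2 : R)) {s : Set M}
    (hs : Submodule.span R s = ⊤) (hpolar : ∀ x ∈ s, ∀ y ∈ s, polar Q x y = 0) : Q = 0 :=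
  polarBilin_injective h2 <| LinearMap.ext_on hs fun x hx ↦
    LinearMap.ext_on hs fun y hy ↦ (hpolar x hx y hy).trans (by simp [polar])

theorem forall_mem_span_pair_eq_zero_iff (Q : QuadraticMap R M N) {p q : M} (hp : Q p = 0)
    (hq : Q q = 0) : (∀ x ∈ Submodule.span R {p, q}, Q x = 0) ↔ Q (p + q) = 0 := by
  refine ⟨fun h ↦ h _ (Submodule.add_mem _ (Submodule.subset_span (by simp))
    (Submodule.subset_span (by simp))), fun hpq x hx ↦ ?_⟩
  obtain ⟨a, b, rfl⟩ := Submodule.mem_span_pair.mp hx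
  have hpolar : polar Q p q = 0 := by simp [polar, hp, hq, hpq]
  rw [QuadraticMap.map_add Q, polar_smul_left, polar_smul_right, hpolar, Q.map_smul, Q.map_smul,
    hp, hq]
  simp

end QuadraticMap

namespace MvPolynomial.IsHomogeneous

variable {R σ : Type*} [CommRing R] [IsDomain R] [Infinite R] {f : MvPolynomial σ R}

theorem exists_aeval_add_ne_zero (hf : f.IsHomogeneous 2) (h2 : IsUnit (2 : R)) (hf₀ : f ≠ 0)
    {s : Set (σ → R)} (hs : Submodule.span R s = ⊤) (hs₀ : ∀ x ∈ s, MvPolynomial.aeval x f = 0) :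
    ∃ x ∈ s, ∃ y ∈ s, MvPolynomial.aeval (x + y) f ≠ 0 := by
  by_contra! hss
  obtain ⟨Q, hQ⟩ := hf.exists_quadraticMap
  have hQ₀ : Q = 0 := Q.eq_zero_of_polar_eq_zero h2 hs fun x hx y hy ↦ by
    simp [QuadraticMap.polar, hQ, hs₀ x hx, hs₀ y hy, hss x hx y hy]
  exact hf₀ <| MvPolynomial.funext fun x ↦ by simpa [hQ₀] using (hQ x).symm

end MvPolynomial.IsHomogeneous

theorem Submodule.finrank_inf_ker_add_one {k V : Type*} [Field k] [AddCommGroup V] [Module k V]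
    (W : Submodule k V) [FiniteDimensional k W] {φ : Module.Dual k V} (h : ¬W ≤ LinearMap.ker φ) :
    Module.finrank k ↥(W ⊓ LinearMap.ker φ) + 1 = Module.finrank k W := by
  have hφ : φ ∘ₗ W.subtype ≠ 0 := by
    contrapose! h
    intro x hx
    simpa using LinearMap.congr_fun h ⟨x, hx⟩
  have hker : LinearMap.ker (φ ∘ₗ W.subtype) = (W ⊓ LinearMap.ker φ).comap W.subtype := by
    rw [LinearMap.ker_comp, comap_inf, comap_subtype_self, top_inf_eq]
  rw [← Module.Dual.finrank_ker_add_one_of_ne_zero hφ, hker,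
    (comapSubtypeEquivOfLe inf_le_left).finrank_eq]

section FormsVanishing

variable {F σ : Type} [Field F] {t : ℕ}

theorem mem_formsVanishingOn {S : Set (σ → F)} {f : MvPolynomial σ F} :
    f ∈ formsVanishingOn F σ t S ↔ f.IsHomogeneous t ∧ ∀ x ∈ S, aeval x f = 0 := by
  simp [formsVanishingOn, Submodule.mem_iInf, mem_homogeneousSubmodule]

theorem formsVanishingOn_antitone : Antitone (formsVanishingOn F σ t) := fun _ _ hST _ hf ↦
  mem_formsVanishingOn.mpr ⟨(mem_formsVanishingOn.mp hf).1,
    fun x hx ↦ (mem_formsVanishingOn.mp hf).2 x (hST hx)⟩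

instance [Finite σ] (S : Set (σ → F)) : FiniteDimensional F (formsVanishingOn F σ t S) :=
  Module.Finite.iff_fg.mpr <| (homogeneousSubmodule_fg σ F t).of_le inf_le_left

theorem formsVanishingOn_union_span_pair {S : Set (σ → F)} {p q : σ → F} (hp : p ∈ S)
    (hq : q ∈ S) :
    formsVanishingOn F σ 2 (S ∪ Submodule.span F {p, q}) =
      formsVanishingOn F σ 2 S ⊓ LinearMap.ker (aeval (p + q)).toLinearMap := by
  ext f
  simp only [Submodule.mem_inf, mem_formsVanishingOn, Set.mem_union, or_imp, forall_and,
    LinearMap.mem_ker, AlgHom.toLinearMap_apply, SetLike.mem_coe]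
  constructor
  · rintro ⟨hf, hS, hL⟩
    exact ⟨⟨hf, hS⟩, hL _ (Submodule.add_mem _ (Submodule.subset_span (by simp))
      (Submodule.subset_span (by simp)))⟩
  · rintro ⟨⟨hf, hS⟩, hpq⟩
    obtain ⟨Q, hQ⟩ := hf.exists_quadraticMap
    simp only [← hQ] at hS hpq ⊢
    exact ⟨hf, hS, (Q.forall_mem_span_pair_eq_zero_iff (hS p hp) (hS q hq)).mpr hpq⟩

end FormsVanishing

section ZariskiTopology

open Topology

variable {F σ : Type} [Field F]

theorem isOpen_zariski_setOf_aeval_ne_zero (g : MvPolynomial σ F) :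
    IsOpen[zariski F σ] {x | aeval x g ≠ 0} :=
  ⟨PrimeSpectrum.basicOpen g, (PrimeSpectrum.basicOpen g).isOpen, by
    ext x; simp [evalPoint]⟩

theorem isOpen_zariskiProd_setOf_aeval_add_ne_zero (f : MvPolynomial σ F) :
    IsOpen[zariskiProd F σ] {z | aeval (z.1 + z.2) f ≠ 0} := by
  let g : MvPolynomial (σ ⊕ σ) F := aeval (fun i ↦ X (Sum.inl i) + X (Sum.inr i)) f
  have hg : ∀ z : (σ → F) × (σ → F), aeval (Sum.elim z.1 z.2) g = aeval (z.1 + z.2) f := by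
    intro z
    rw [← AlgHom.comp_apply, comp_aeval]
    congr 1
    ext i
    simp
  refine ⟨_, isOpen_zariski_setOf_aeval_ne_zero g, Set.ext fun z ↦ ?_⟩
  show aeval (Sum.elim z.1 z.2) g ≠ 0 ↔ _
  rw [hg]
  rfl

end ZariskiTopology

/-- `h0I K n 2 (A ∪ B) - 1` is truncated subtraction in `ℕ`, i.e. `max {0, h⁰(ℐ_{A ∪ B}(2)) − 1}`.
-/
theorem h0_quadrics_through_union_with_general_secant_line
    (n : ℕ)
    (A B : Set (Fin (n + 1) → K))
    (hBnondeg : Submodule.span K B = ⊤) :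
    ∃ U : Set ((Fin (n + 1) → K) × (Fin (n + 1) → K)),
      @IsOpen _ (zariskiProd K _) U ∧ ((B ×ˢ B) ∩ U).Nonempty ∧
      ∀ p q : Fin (n + 1) → K, p ∈ B → q ∈ B → (p, q) ∈ U →
        LinearIndependent K ![p, q] →
        A ∩ (Submodule.span K {p, q} : Set (Fin (n + 1) → K)) ⊆ {0} →
        h0I K n 2 (A ∪ B ∪ (Submodule.span K {p, q} : Set (Fin (n + 1) → K))) =
          h0I K n 2 (A ∪ B) - 1 := by
  simp only [h0I]
  set W := formsVanishingOn K (Fin (n + 1)) 2 (A ∪ B) with hW_def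
  by_cases hW : W = ⊥
  · obtain ⟨b, hb⟩ : B.Nonempty := by
      rw [Set.nonempty_iff_ne_empty]
      rintro rfl
      simp at hBnondeg
    refine ⟨Set.univ, @isOpen_univ _ (zariskiProd K _), ⟨(b, b), ⟨hb, hb⟩, trivial⟩,
      fun p q _ _ _ _ _ ↦ ?_⟩
    have hW' := eq_bot_mono (formsVanishingOn_antitone (Set.subset_union_left (t :=
      (Submodule.span K {p, q} : Set (Fin (n + 1) → K))))) hW
    rw [hW, hW', finrank_bot]
  · refine ⟨⋃ f ∈ W, {z | aeval (z.1 + z.2) f ≠ 0},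
      @isOpen_biUnion _ _ (zariskiProd K _) _ _ fun f _ ↦
        isOpen_zariskiProd_setOf_aeval_add_ne_zero f, ?_, fun p q hp hq hU _ _ ↦ ?_⟩
    · obtain ⟨f, hfW, hf₀⟩ := (Submodule.ne_bot_iff W).mp hW
      obtain ⟨hf, hfAB⟩ := mem_formsVanishingOn.mp hfW
      obtain ⟨p, hp, q, hq, hpq⟩ := hf.exists_aeval_add_ne_zero (isUnit_of_invertible 2) hf₀
        hBnondeg fun x hx ↦ hfAB x (Or.inr hx)
      exact ⟨(p, q), ⟨hp, hq⟩, Set.mem_biUnion hfW hpq⟩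
    · obtain ⟨f, hfW, hpq⟩ := Set.mem_iUnion₂.mp hU
      have hdim := W.finrank_inf_ker_add_one (φ := (aeval (p + q)).toLinearMap)
        fun hle ↦ hpq (hle hfW)
      rw [formsVanishingOn_union_span_pair (Or.inr hp) (Or.inr hq), ← hW_def]
      omega
end
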